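/- arXiv:2605.22046 — 2 statements merged into one kernel-verified Lean document; each statement's English description precedes it below -/
import Mathlib

section
/- Let R be a valuation ring with fraction field K, and let M be an R-module. Suppose there exists a finitely generated R-submodule M' ⊆ M and an element π ∈ R, π ≠ 0, such that π^n · (M/M') = 0 for some n ≥ 1. Then the image of M under the canonical map M → M ⊗_R K is an R-lattice, i.e., there exists a finitely generated free R-submodule E of M ⊗_R K such that E ⊆ image(M) ⊆ π^{-n}E. -/
open Submodule

lemma exists_dvd_all_aux {R : Type*} [CommRing R] [IsDomain R] [ValuationRing R]
    (s : Finset R) (hs : s.Nonempty) : ∃ a ∈ s, ∀ b ∈ s, a ∣ b := by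
  classical
  induction s using Finset.induction with
  | empty => exact absurd hs (by simp)
  | @insert x t hx ih =>
    rcases t.eq_empty_or_nonempty with rfl | ht
    · exact ⟨x, by simp⟩
    · obtain ⟨a, ha, hdvd⟩ := ih ht
      rcases ValuationRing.dvd_total a x with h | h
      · refine ⟨a, Finset.mem_insert_of_mem ha, fun b hb => ?_⟩
        rcases Finset.mem_insert.mp hb with rfl | hb
        · exact h
        · exact hdvd b hb
      · refine ⟨x, Finset.mem_insert_self x t, fun b hb => ?_⟩
        rcases Finset.mem_insert.mp hb with rfl | hb
        · exact dvd_rfl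
        · exact h.trans (hdvd b hb)

lemma free_span_fin {R V : Type*} [CommRing R] [IsDomain R] [ValuationRing R]
    [AddCommGroup V] [Module R V] [NoZeroSMulDivisors R V] :
    ∀ (k : ℕ) (v : Fin k → V), Module.Free R (span R (Set.range v)) := by
  intro k
  induction k with
  | zero =>
    intro v
    rw [show Set.range v = ∅ from Set.range_eq_empty v, span_empty]
    infer_instance
  | succ m ih =>
    intro v
    by_cases hli : LinearIndependent R v
    · exact Module.Free.of_basis (Module.Basis.span hli)
    · classical
      obtain ⟨g, hsum, i0, hi0⟩ := Fintype.not_linearIndependent_iff.mp hli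
      have hne : ((Finset.univ.filter fun i => g i ≠ 0).image g).Nonempty :=
        ⟨g i0, Finset.mem_image_of_mem g (by simp [hi0])⟩
      obtain ⟨a, ha, hdvd⟩ := exists_dvd_all_aux _ hne
      obtain ⟨j, hj, rfl⟩ := Finset.mem_image.mp ha
      have hgj : g j ≠ 0 := by simpa using (Finset.mem_filter.mp hj).2
      have hdvd' : ∀ i, g j ∣ g i := by
        intro i
        by_cases hgi : g i = 0
        · simp [hgi]
        · exact hdvd (g i) (Finset.mem_image_of_mem g (by simp [hgi]))
      choose b hb using hdvd'
      have hsum2 : g j • (∑ i, b i • v i) = 0 := by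
        rw [Finset.smul_sum, ← hsum]
        exact Finset.sum_congr rfl fun i _ => by rw [smul_smul, ← hb i]
      have hsum3 : (∑ i, b i • v i) = 0 :=
        (smul_eq_zero.mp hsum2).resolve_left hgj
      have hbj : b j = 1 := by
        have h := hb j
        nth_rewrite 1 [show g j = g j * 1 by ring] at h
        exact (mul_left_cancel₀ hgj h).symm
      have hvj : v j = -∑ i ∈ Finset.univ.erase j, b i • v i := by
        have h := Finset.add_sum_erase Finset.univ (fun i => b i • v i) (Finset.mem_univ j)
        simp only [hbj, one_smul] at h
        rw [← h] at hsum3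
        exact eq_neg_of_add_eq_zero_left hsum3
      have hmem : v j ∈ span R (v '' {j}ᶜ) := by
        rw [hvj]
        refine neg_mem (Submodule.sum_mem _ fun i hi => Submodule.smul_mem _ _ (subset_span ?_))
        exact ⟨i, by simpa using (Finset.mem_erase.mp hi).1, rfl⟩
      have hspan : span R (Set.range v) = span R (Set.range (v ∘ j.succAbove)) := by
        rw [Set.range_comp, Fin.range_succAbove]
        rw [show Set.range v = insert (v j) (v '' {j}ᶜ) by
          rw [← Set.image_insert_eq,
            show insert j ({j}ᶜ : Set (Fin (m + 1))) = Set.univ from by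
              ext x; by_cases hx : x = j <;> simp [hx],
            Set.image_univ]]
        exact span_insert_eq_span hmem
      rw [hspan]
      exact ih _

/-- Let `R` be a valuation ring with fraction field `K` and `M` an
`R`-module.  If there is a finitely generated submodule `M' ⊆ M` and `π ≠ 0` in `R` with
`π ^ n • (M / M') = 0` for some `n ≥ 1`, then the image of `M` in `M ⊗[R] K` is an
`R`-lattice: there is a finitely generated free `R`-submodule `E` of `M ⊗[R] K` with
`E ⊆ image(M) ⊆ π⁻ⁿ • E` (the last inclusion expressed as `πⁿ • image(M) ⊆ E`). -/
theorem statement0 (R K M : Type*) [CommRing R] [IsDomain R] [ValuationRing R]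
    [Field K] [Algebra R K] [IsFractionRing R K]
    [AddCommGroup M] [Module R M]
    (M' : Submodule R M) (hM' : M'.FG) (π : R) (hπ : π ≠ 0) (n : ℕ) (hn : 1 ≤ n)
    (htor : ∀ m : M, π ^ n • (Submodule.Quotient.mk m : M ⧸ M') = 0) :
    ∃ E : Submodule R (TensorProduct R K M),
      E.FG ∧ Module.Free R E ∧
      E ≤ LinearMap.range (TensorProduct.mk R K M (1 : K)) ∧
      ∀ x ∈ LinearMap.range (TensorProduct.mk R K M (1 : K)),
        (algebraMap R K π) ^ n • x ∈ E := by
  classical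
  have hnzsd : NoZeroSMulDivisors R (TensorProduct R K M) := by
    refine ⟨fun {r x} h => ?_⟩
    by_cases hr : r = 0
    · exact Or.inl hr
    · right
      have h1 : algebraMap R K r • x = 0 := by rw [algebraMap_smul]; exact h
      have h2 : algebraMap R K r ≠ 0 := by
        simpa using (IsFractionRing.to_map_eq_zero_iff (K := K)).not.mpr hr
      exact (smul_eq_zero.mp h1).resolve_left h2
  set f := TensorProduct.mk R K M (1 : K) with hf
  refine ⟨M'.map f, hM'.map f, ?_, ?_, ?_⟩
  · -- free
    obtain ⟨s, hs⟩ := hM'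
    obtain ⟨k, v, hvinj, hvr⟩ := (s.finite_toSet.image f).fin_param
    have : M'.map f = span R (Set.range v) := by
      rw [← hs, Submodule.map_span, hvr]
    rw [this]
    exact free_span_fin k v
  · rintro x ⟨m, hm, rfl⟩
    exact ⟨m, rfl⟩
  · rintro x ⟨m, rfl⟩
    have hmem : π ^ n • m ∈ M' := by
      have := htor m
      rw [← Submodule.Quotient.mk_smul, Submodule.Quotient.mk_eq_zero] at this
      exact this
    refine ⟨π ^ n • m, hmem, ?_⟩
    show (1 : K) ⊗ₜ[R] (π ^ n • m) = (algebraMap R K π) ^ n • ((1:K) ⊗ₜ[R] m)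
    rw [TensorProduct.tmul_smul, ← map_pow, algebraMap_smul]
end

section
/- Let R be a complete discrete valuation ring with uniformizer π. An R-module M satisfies: there exists a finitely generated submodule M' ⊆ M with M/M' killed by a power of π, if and only if the torsion submodule M_tor of M is annihilated by a fixed power of π and M/M_tor is finitely generated. -/
private lemma fg_of_le_fg {R M : Type*} [CommRing R] [IsNoetherianRing R]
    [AddCommGroup M] [Module R M] {N P : Submodule R M} (hP : P.FG) (h : N ≤ P) : N.FG := by
  haveI : Module.Finite R ↥P := Module.Finite.iff_fg.mpr hP
  have h1 : (N.comap P.subtype).FG := IsNoetherian.noetherian _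
  have h2 : (N.comap P.subtype).map P.subtype = N := by
    rw [Submodule.map_comap_subtype, inf_eq_right.mpr h]
  rw [← h2]
  exact h1.map _

/-- Let `R` be a complete discrete valuation ring with uniformizer `π`.
An `R`-module `M` admits a finitely generated submodule `M' ⊆ M` with `M/M'` killed by a
power of `π` if and only if the torsion submodule `M_tor` is annihilated by a fixed power
of `π` and `M/M_tor` is finitely generated. -/
theorem statement1 (R M : Type*) [CommRing R] [IsDomain R] [IsDiscreteValuationRing R]
    [IsAdicComplete (IsLocalRing.maximalIdeal R) R]
    (π : R) (hπ : Irreducible π)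
    [AddCommGroup M] [Module R M] :
    (∃ M' : Submodule R M, M'.FG ∧ ∃ n : ℕ,
        ∀ m : M, π ^ n • (Submodule.Quotient.mk m : M ⧸ M') = 0) ↔
      ((∃ n : ℕ, ∀ x ∈ Submodule.torsion R M, π ^ n • x = 0) ∧
        Module.Finite R (M ⧸ Submodule.torsion R M)) := by
  classical
  constructor
  · rintro ⟨M', hfg, n, hn⟩
    have hn' : ∀ m : M, π ^ n • m ∈ M' := by
      intro m
      have := hn m
      rwa [← Submodule.Quotient.mk_smul, Submodule.Quotient.mk_eq_zero] at this
    constructor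
    · -- torsion bounded
      set N := M' ⊓ Submodule.torsion R M with hN
      have hNfg : N.FG := fg_of_le_fg hfg inf_le_left
      obtain ⟨s, hs⟩ := hNfg
      -- each generator is torsion; product of annihilators
      have hkill : ∃ r : R, r ≠ 0 ∧ ∀ x ∈ N, r • x = 0 := by
        have hgen : ∀ x ∈ s, ∃ r : R, r ≠ 0 ∧ r • x = 0 := by
          intro x hx
          have : x ∈ N := hs ▸ Submodule.subset_span hx
          obtain ⟨⟨r, hr⟩, hrx⟩ := this.2
          exact ⟨r, mem_nonZeroDivisors_iff_ne_zero.mp hr, hrx⟩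
        choose! r hr0 hrx using hgen
        refine ⟨s.prod r, Finset.prod_ne_zero_iff.mpr hr0, ?_⟩
        intro x hx
        rw [← hs] at hx
        induction hx using Submodule.span_induction with
        | mem y hy =>
            have hy' : y ∈ s := Finset.mem_coe.mp hy
            have he : s.prod r = r y * (s.erase y).prod r :=
              (Finset.mul_prod_erase s r hy').symm
            rw [he, mul_comm, mul_smul, hrx y hy', smul_zero]
        | zero => simp
        | add a b _ _ ha hb => rw [smul_add, ha, hb, add_zero]
        | smul c a _ ha => rw [smul_comm, ha, smul_zero]
      obtain ⟨r, hr0, hr⟩ := hkill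
      obtain ⟨k, u, hu⟩ := IsDiscreteValuationRing.associated_pow_irreducible hr0 hπ
      refine ⟨n + k, fun x hx => ?_⟩
      have h1 : π ^ n • x ∈ N := ⟨hn' x, Submodule.smul_mem _ _ hx⟩
      have := hr _ h1
      calc π ^ (n + k) • x = π ^ k • π ^ n • x := by
            rw [← mul_smul, ← pow_add, add_comm]
        _ = 0 := by
            rw [← hu, mul_comm, mul_smul, this, smul_zero]
    · -- M ⧸ torsion finite
      set T := Submodule.torsion R M
      set Q := M ⧸ T
      set g : Q →ₗ[R] Q := π ^ n • LinearMap.id with hg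
      have hginj : Function.Injective g := by
        intro a b hab
        have : π ^ n • (a - b) = 0 := by
          simp only [hg, LinearMap.smul_apply, LinearMap.id_apply] at hab
          rw [smul_sub, hab, sub_self]
        have hπn : (π : R) ^ n ≠ 0 := pow_ne_zero _ hπ.ne_zero
        have := (smul_eq_zero.mp this).resolve_left hπn
        exact sub_eq_zero.mp this
      have hrange : LinearMap.range g ≤ M'.map T.mkQ := by
        rintro _ ⟨q, rfl⟩
        obtain ⟨m, rfl⟩ := T.mkQ_surjective q
        refine ⟨π ^ n • m, hn' m, ?_⟩
        simp [hg]
      have hrfg : (LinearMap.range g).FG := fg_of_le_fg (hfg.map _) hrange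
      haveI : Module.Finite R ↥(LinearMap.range g) := Module.Finite.iff_fg.mpr hrfg
      exact Module.Finite.equiv (LinearEquiv.ofInjective g hginj).symm
  · rintro ⟨⟨n, hn⟩, hfin⟩
    set T := Submodule.torsion R M
    obtain ⟨s, hs⟩ := hfin.1
    choose lift hlift using T.mkQ_surjective
    set M' : Submodule R M := Submodule.span R (lift '' ↑s) with hM'
    have hmap : M'.map T.mkQ = ⊤ := by
      rw [hM', Submodule.map_span, ← hs]
      congr 1
      rw [← Set.image_comp]
      ext x
      simp [hlift]
    refine ⟨M', Submodule.fg_span (s.finite_toSet.image _), n, fun m => ?_⟩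
    rw [← Submodule.Quotient.mk_smul, Submodule.Quotient.mk_eq_zero]
    have : T.mkQ m ∈ M'.map T.mkQ := hmap ▸ Submodule.mem_top
    obtain ⟨c, hc, hcm⟩ := this
    have htor : m - c ∈ T := by
      rw [← Submodule.Quotient.mk_eq_zero T, Submodule.Quotient.mk_sub]
      simp only [Submodule.mkQ_apply] at hcm
      rw [hcm, sub_self]
    have := hn _ htor
    rw [smul_sub, sub_eq_zero] at this
    rw [this]
    exact Submodule.smul_mem _ _ hc
end
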